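/- arXiv:1808.08665 — 10 statements merged into one kernel-verified Lean document; each statement's English description precedes it below -/
import Mathlib

section
/- Let g : ℝ → ℂ be a Schwartz function whose Fourier transform 𝓕g is real-valued and nonnegative, and let T > 0. Define the inter-user interference energy IUI(τ) = ∑_{i ∈ ℤ} ‖g(τ + i·T)‖², which converges for every τ ∈ ℝ. Then for every τ ∈ ℝ, IUI(τ) ≤ IUI(0), i.e. ∑_{i ∈ ℤ} ‖g(τ + i·T)‖² ≤ ∑_{i ∈ ℤ} ‖g(i·T)‖². -/
open MeasureTheory SchwartzMap

section IUIHelpers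
open Real Complex FourierTransform

private lemma IUI_schwartz_temperate (φ : SchwartzMap ℝ ℂ) :
    Function.HasTemperateGrowth ⇑φ := by
  refine ⟨φ.smooth ⊤, fun n => ?_⟩
  obtain ⟨C, hC⟩ := φ.decay 0 n
  exact ⟨0, C, fun x => by simpa using hC.2 x⟩

private lemma IUI_schwartz_bound (φ : SchwartzMap ℝ ℂ) : ∃ C : ℝ, ∀ t, ‖φ t‖ ≤ C := by
  obtain ⟨C, hC⟩ := φ.decay 0 0
  exact ⟨C, fun t => by simpa [norm_iteratedFDeriv_zero] using hC.2 t⟩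

private lemma IUI_summable_norm_int (φ : SchwartzMap ℝ ℂ) :
    Summable fun n : ℤ => ‖φ (n : ℝ)‖ :=
  summable_of_isBigO (Real.summable_abs_int_rpow one_lt_two)
    ((φ.isBigO_cocompact_rpow (-2)).norm_left.comp_tendsto Int.tendsto_coe_cofinite)

private lemma IUI_hasTemperateGrowth_add_const (x : ℝ) :
    Function.HasTemperateGrowth (fun t : ℝ => t + x) := by
  apply Function.HasTemperateGrowth.of_fderiv (k := 1) (C := 1 + |x|)
  · have : (fderiv ℝ fun t : ℝ => t + x) = fun _ => ContinuousLinearMap.id ℝ ℝ := by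
      funext t
      rw [fderiv_add_const, fderiv_id']
    rw [this]
    exact .const _
  · exact differentiable_id.add_const x
  · intro t
    simp only [Real.norm_eq_abs, pow_one]
    have h1 := abs_add_le t x
    have h2 := abs_nonneg t
    have h3 := abs_nonneg x
    nlinarith

private noncomputable def IUI_translate (x : ℝ) (φ : SchwartzMap ℝ ℂ) : SchwartzMap ℝ ℂ :=
  compCLMOfAntilipschitz ℝ (IUI_hasTemperateGrowth_add_const x)
    ((Isometry.of_dist_eq (fun a b => by simp [Real.dist_eq])).antilipschitz) φ

private lemma IUI_translate_apply (x : ℝ) (φ : SchwartzMap ℝ ℂ) (t : ℝ) :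
    IUI_translate x φ t = φ (t + x) := rfl

private lemma IUI_summable_sq (φ : SchwartzMap ℝ ℂ) (x : ℝ) :
    Summable fun n : ℤ => ‖φ (x + (n : ℝ))‖ ^ 2 := by
  obtain ⟨C, hC⟩ := IUI_schwartz_bound φ
  have h1 : Summable fun n : ℤ => ‖φ (x + (n : ℝ))‖ := by
    refine (IUI_summable_norm_int (IUI_translate x φ)).congr fun n => ?_
    rw [IUI_translate_apply, add_comm]
  refine (h1.mul_left C).of_nonneg_of_le (fun n => by positivity) fun n => ?_
  rw [pow_two]
  exact mul_le_mul_of_nonneg_right (hC _) (norm_nonneg _)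

private lemma IUI_conj_fourierChar (a : ℝ) :
    (starRingEnd ℂ) (𝐞 a : ℂ) = (𝐞 (-a) : ℂ) := by
  rw [show (𝐞 (-a)) = (𝐞 a)⁻¹ from AddChar.map_neg_eq_inv 𝐞 a, Circle.coe_inv_eq_conj]

private lemma IUI_fourierChar_add (a b : ℝ) :
    (𝐞 (a + b) : ℂ) = (𝐞 a : ℂ) * (𝐞 b : ℂ) := by
  rw [AddChar.map_add_eq_mul]; norm_cast

private noncomputable def IUI_dilate (T : ℝ) (hT : T ≠ 0) (g : SchwartzMap ℝ ℂ) :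
    SchwartzMap ℝ ℂ :=
  compCLMOfContinuousLinearEquiv ℝ
    ((LinearEquiv.smulOfNeZero ℝ ℝ T hT).toContinuousLinearEquiv) g

private lemma IUI_dilate_apply (T : ℝ) (hT : T ≠ 0) (g : SchwartzMap ℝ ℂ) (t : ℝ) :
    IUI_dilate T hT g t = g (T * t) := rfl

private lemma IUI_fourier_dilate (T : ℝ) (hT : 0 < T) (g : SchwartzMap ℝ ℂ) (s : ℝ) :
    𝓕 (⇑(IUI_dilate T hT.ne' g)) s
      = (|T⁻¹| : ℝ) • 𝓕 (⇑g) (s / T) := by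
  rw [Real.fourier_real_eq]
  have key : ∀ t : ℝ, 𝐞 (-(t * s)) • (IUI_dilate T hT.ne' g) t
      = (fun u : ℝ => 𝐞 (-(u * (s / T))) • g u) (T * t) := by
    intro t
    have : T * t * (s / T) = t * s := by field_simp
    simp only [IUI_dilate_apply, this]
  rw [integral_congr_ae (Filter.Eventually.of_forall key),
    MeasureTheory.Measure.integral_comp_mul_left (fun u : ℝ => 𝐞 (-(u * (s / T))) • g u) T,
    ← Real.fourier_real_eq]

private noncomputable def IUI_conjMulCLM : ℂ →L[ℝ] ℂ →L[ℝ] ℂ :=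
  ((ContinuousLinearMap.mul ℝ ℂ).flip.comp Complex.conjCLE.toContinuousLinearMap).flip

private noncomputable def IUI_mulConj (w : SchwartzMap ℝ ℂ) : SchwartzMap ℝ ℂ :=
  bilinLeftCLM IUI_conjMulCLM (IUI_schwartz_temperate w) w

private lemma IUI_mulConj_apply (w : SchwartzMap ℝ ℂ) (t : ℝ) :
    IUI_mulConj w t = w t * (starRingEnd ℂ) (w t) := rfl

private lemma IUI_mulConj_norm (w : SchwartzMap ℝ ℂ) (t : ℝ) :
    IUI_mulConj w t = ((‖w t‖ ^ 2 : ℝ) : ℂ) := by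
  rw [IUI_mulConj_apply, Complex.mul_conj]
  norm_cast
  simp [Complex.normSq_eq_norm_sq]

/-- The key positivity step: the Fourier transform of `w * conj w` is a nonnegative real
number whenever `𝓕 w` is (pointwise) a nonnegative real. -/
private lemma IUI_fourier_mul_conj_real_nonneg (w : SchwartzMap ℝ ℂ) (ρ : ℝ → ℝ)
    (hρ : ∀ s, 0 ≤ ρ s) (hW : ∀ s, 𝓕 ⇑w s = ((ρ s : ℝ) : ℂ)) (f : ℝ) :
    ∃ r : ℝ, 0 ≤ r ∧
      𝓕 (fun t => w t * (starRingEnd ℂ) (w t)) f = (r : ℂ) := by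
  set φ : SchwartzMap ℝ ℂ := 𝓕⁻ w with hφdef
  have hwφ : ∀ t, w t = 𝓕 ⇑φ t := by
    intro t
    conv_lhs => rw [← FourierInvPair.fourier_fourierInv_eq (E := SchwartzMap ℝ ℂ) (F := SchwartzMap ℝ ℂ) w]
    rfl
  have hφ_eq : ∀ x, φ x = ((ρ (-x) : ℝ) : ℂ) := by
    intro x
    have h1 : φ x = 𝓕⁻ ⇑w x :=
      congrFun (fourierInv_coe w) x
    rw [h1, Real.fourierInv_eq_fourier_neg, hW]
  set ψ : ℝ → ℂ := fun t => 𝐞 (-(t * f)) • (starRingEnd ℂ) (w t) with hψdef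
  have hψc : Continuous ψ := by
    apply Continuous.smul
    · exact continuous_subtype_val.comp (Real.continuous_fourierChar.comp (continuous_id.mul continuous_const).neg)
    · exact Complex.continuous_conj.comp w.continuous
  have hψint : Integrable ψ := by
    refine w.integrable.norm.mono' hψc.aestronglyMeasurable ?_
    filter_upwards with t
    simp [ψ, Circle.norm_smul]
  have step1 : 𝓕 (fun t => w t * (starRingEnd ℂ) (w t)) f
      = ∫ t, (𝓕 ⇑φ t) • ψ t := by
    rw [Real.fourier_real_eq]
    refine integral_congr_ae (Filter.Eventually.of_forall fun t => ?_)
    simp only [ψ, Circle.smul_def, smul_eq_mul]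
    rw [← hwφ t]
    ring
  have flipped : ∫ t, (𝓕 ⇑φ t) • ψ t
      = ∫ x, φ x • 𝓕 ψ x := by
    have hL : Continuous fun p : ℝ × ℝ => (innerₗ ℝ) p.1 p.2 := continuous_inner
    have h := VectorFourier.integral_fourierIntegral_smul_eq_flip (L := innerₗ ℝ)
      (μ := volume) (ν := volume) Real.continuous_fourierChar hL φ.integrable hψint
    rw [flip_innerₗ] at h
    exact h
  have step3 : ∀ x, 𝓕 ψ x
      = (starRingEnd ℂ) (𝓕 ⇑w (-(x + f))) := by
    intro x
    rw [Real.fourier_real_eq, Real.fourier_real_eq, ← integral_conj]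
    refine integral_congr_ae (Filter.Eventually.of_forall fun t => ?_)
    simp only [ψ, Circle.smul_def, smul_eq_mul, map_mul]
    rw [IUI_conj_fourierChar, show -(-(t * -(x + f))) = -(t * x) + -(t * f) by ring,
      IUI_fourierChar_add]
    ring
  refine ⟨∫ x, ρ (-x) * ρ (-(x + f)),
    integral_nonneg fun x => mul_nonneg (hρ _) (hρ _), ?_⟩
  calc 𝓕 (fun t => w t * (starRingEnd ℂ) (w t)) f
      = ∫ x, φ x • 𝓕 ψ x := by rw [step1, flipped]
    _ = ∫ x, ((ρ (-x) * ρ (-(x + f)) : ℝ) : ℂ) := by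
        refine integral_congr_ae (Filter.Eventually.of_forall fun x => ?_)
        simp only []
        rw [step3 x, hW, hφ_eq, Complex.conj_ofReal, smul_eq_mul, ← Complex.ofReal_mul]
    _ = ((∫ x, ρ (-x) * ρ (-(x + f)) : ℝ) : ℂ) := integral_ofReal

end IUIHelpers

open Real Complex FourierTransform in
/-- For a Schwartz pulse `g` whose Fourier transform is real-valued and
nonnegative, the inter-user interference energy `IUI(τ) = ∑_{i ∈ ℤ} ‖g(τ + iT)‖²`
is maximized at `τ = 0`. -/
theorem IUI_le_IUI_zero (g : SchwartzMap ℝ ℂ) (T : ℝ) (hT : 0 < T)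
    (hreal : ∀ f : ℝ, (FourierTransform.fourier (⇑g : ℝ → ℂ) f).im = 0)
    (hnonneg : ∀ f : ℝ, 0 ≤ (FourierTransform.fourier (⇑g : ℝ → ℂ) f).re)
    (τ : ℝ) :
    ∑' i : ℤ, ‖g (τ + (i : ℝ) * T)‖ ^ 2 ≤ ∑' i : ℤ, ‖g ((i : ℝ) * T)‖ ^ 2 := by
  set x : ℝ := τ / T with hxdef
  set w : SchwartzMap ℝ ℂ := IUI_dilate T hT.ne' g with hwdef
  -- the Fourier transform of `w` is the nonnegative real function `ρ`
  set ρ : ℝ → ℝ := fun s => |T⁻¹| * (𝓕 (⇑g : ℝ → ℂ) (s / T)).re with hρdef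
  have hρ : ∀ s, 0 ≤ ρ s := fun s => mul_nonneg (abs_nonneg _) (hnonneg _)
  have hgreal : ∀ y : ℝ, 𝓕 (⇑g : ℝ → ℂ) y
      = (((𝓕 (⇑g : ℝ → ℂ) y).re : ℝ) : ℂ) := by
    intro y
    rw [← Complex.re_add_im (𝓕 (⇑g : ℝ → ℂ) y), hreal y]
    simp
  have hW : ∀ s, 𝓕 ⇑w s = ((ρ s : ℝ) : ℂ) := by
    intro s
    rw [hwdef, IUI_fourier_dilate T hT g s, hgreal (s / T)]
    simp [ρ, Complex.real_smul]
  -- the Schwartz function `v = w * conj w`, whose values are `‖w t‖²`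
  set v : SchwartzMap ℝ ℂ := IUI_mulConj w with hvdef
  have hveq : ⇑v = fun t => w t * (starRingEnd ℂ) (w t) := funext (IUI_mulConj_apply w)
  have key : ∀ s : ℝ, ∃ r : ℝ, 0 ≤ r ∧ 𝓕 ⇑v s = (r : ℂ) := by
    intro s
    rw [hveq]
    exact IUI_fourier_mul_conj_real_nonneg w ρ hρ hW s
  choose r hr0 hrv using key
  have hc : ∀ s : ℝ, (fourierTransformCLM ℝ v) s = ((r s : ℝ) : ℂ) := fun s => by
    rw [fourierTransformCLM_apply, fourier_coe, hrv s]
  -- summability facts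
  have hsum_c_norm : Summable fun n : ℤ => ‖fourierTransformCLM ℝ v (n : ℝ)‖ :=
    IUI_summable_norm_int (fourierTransformCLM ℝ v)
  have hr_sum : Summable fun n : ℤ => r (n : ℝ) := by
    refine hsum_c_norm.congr fun n => ?_
    rw [hc, Complex.norm_real, Real.norm_eq_abs, _root_.abs_of_nonneg (hr0 _)]
  have hsum_c : Summable fun n : ℤ => fourierTransformCLM ℝ v (n : ℝ) :=
    hsum_c_norm.of_norm
  -- Poisson summation for `v`
  have poisson := SchwartzMap.tsum_eq_tsum_fourier v
  have hfn : ∀ (n : ℤ) (y : UnitAddCircle), ‖fourier n y‖ = 1 := fun n y => Circle.norm_coe _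
  -- rewrite both sides
  have hA : (∑' i : ℤ, ‖g (τ + (i : ℝ) * T)‖ ^ 2) = ∑' n : ℤ, ‖w (x + (n : ℝ))‖ ^ 2 := by
    refine tsum_congr fun n => ?_
    have harg : τ + (n : ℝ) * T = T * (x + (n : ℝ)) := by
      rw [hxdef]; field_simp
    rw [harg, hwdef, IUI_dilate_apply]
  have hB : (∑' i : ℤ, ‖g ((i : ℝ) * T)‖ ^ 2) = ∑' n : ℤ, ‖w ((0 : ℝ) + (n : ℝ))‖ ^ 2 := by
    refine tsum_congr fun n => ?_
    have harg : (n : ℝ) * T = T * ((0 : ℝ) + (n : ℝ)) := by ring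
    rw [harg, hwdef, IUI_dilate_apply]
  have hcast : ∀ y : ℝ, ((∑' n : ℤ, ‖w (y + (n : ℝ))‖ ^ 2 : ℝ) : ℂ)
      = ∑' n : ℤ, fourierTransformCLM ℝ v (n : ℝ) * fourier n (y : UnitAddCircle) := by
    intro y
    rw [Complex.ofReal_tsum]
    rw [tsum_congr fun n : ℤ => (IUI_mulConj_norm w (y + (n : ℝ))).symm]
    exact poisson y
  -- the main estimate
  rw [hA, hB]
  have hsum_cf : Summable fun n : ℤ =>
      ‖fourierTransformCLM ℝ v (n : ℝ) * fourier n ((x : ℝ) : UnitAddCircle)‖ := by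
    refine hsum_c_norm.congr fun n => ?_
    rw [norm_mul, hfn, mul_one]
  calc ∑' n : ℤ, ‖w (x + (n : ℝ))‖ ^ 2
      = (((∑' n : ℤ, ‖w (x + (n : ℝ))‖ ^ 2 : ℝ) : ℂ)).re := by rw [Complex.ofReal_re]
    _ ≤ ‖(((∑' n : ℤ, ‖w (x + (n : ℝ))‖ ^ 2 : ℝ) : ℂ))‖ := Complex.re_le_norm _
    _ = ‖∑' n : ℤ, fourierTransformCLM ℝ v (n : ℝ) * fourier n ((x : ℝ) : UnitAddCircle)‖ := by
        rw [hcast x]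
    _ ≤ ∑' n : ℤ, ‖fourierTransformCLM ℝ v (n : ℝ) * fourier n ((x : ℝ) : UnitAddCircle)‖ :=
        norm_tsum_le_tsum_norm hsum_cf
    _ = ∑' n : ℤ, r (n : ℝ) := by
        refine tsum_congr fun n => ?_
        rw [norm_mul, hfn, mul_one, hc, Complex.norm_real, Real.norm_eq_abs,
          _root_.abs_of_nonneg (hr0 _)]
    _ = ∑' n : ℤ, (fourierTransformCLM ℝ v (n : ℝ) * fourier n (((0 : ℝ) : UnitAddCircle))).re := by
        refine tsum_congr fun n => ?_
        rw [show (((0 : ℝ) : UnitAddCircle)) = 0 by norm_num, fourier_eval_zero, mul_one, hc]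
        simp
    _ = (∑' n : ℤ, fourierTransformCLM ℝ v (n : ℝ) * fourier n (((0 : ℝ) : UnitAddCircle))).re := by
        rw [Complex.re_tsum]
        refine hsum_c.congr fun n => ?_
        rw [show (((0 : ℝ) : UnitAddCircle)) = 0 by norm_num, fourier_eval_zero, mul_one]
    _ = ∑' n : ℤ, ‖w ((0 : ℝ) + (n : ℝ))‖ ^ 2 := by
        rw [← hcast 0, Complex.ofReal_re]
end

section
/- Let g : ℝ → ℂ be a Schwartz function with Fourier transform G = 𝓕g, and let T > 0 and τ ∈ ℝ. Then ∑_{n ∈ ℤ} ‖g(τ + n·T)‖² = (1/T) · ∫_{-1/(2T)}^{1/(2T)} ‖ ∑_{k ∈ ℤ} G(f + k/T) · e^{2πi (f + k/T) τ} ‖² df, where the inner sum over k converges absolutely for every f. -/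
open MeasureTheory SchwartzMap Real Complex

open scoped FourierTransform ContinuousMap

/-- Parseval identity relating the sample energy of a offset-sampled
Schwartz pulse to the energy of its aliased (periodized) spectrum over one period. -/
theorem sample_energy_eq_aliased_spectrum_energy (g : SchwartzMap ℝ ℂ) (T τ : ℝ)
    (hT : 0 < T) (G : ℝ → ℂ) (hG : G = FourierTransform.fourier (⇑g : ℝ → ℂ)) :
    (∀ f : ℝ, Summable fun k : ℤ =>
        ‖G (f + (k : ℝ) / T) *
          Complex.exp (2 * (Real.pi : ℂ) * Complex.I * ((f : ℂ) + (k : ℂ) / (T : ℂ)) * (τ : ℂ))‖) ∧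
    ∑' n : ℤ, ‖g (τ + (n : ℝ) * T)‖ ^ 2 =
      (1 / T) * ∫ f in (-(1 / (2 * T)))..(1 / (2 * T)),
        ‖∑' k : ℤ, G (f + (k : ℝ) / T) *
          Complex.exp (2 * (Real.pi : ℂ) * Complex.I * ((f : ℂ) + (k : ℂ) / (T : ℂ)) * (τ : ℂ))‖ ^ 2 := by
  haveI : Fact ((0:ℝ) < 1) := ⟨one_pos⟩
  have hT0 : T ≠ 0 := hT.ne'
  have hGS : G = ⇑(fourierTransformCLM ℝ g) := by rw [hG, fourierTransformCLM_apply, fourier_coe]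
  -- the function whose periodization has the samples as Fourier coefficients
  set h : ℝ → ℂ := fun u => G (u / T) *
      Complex.exp (2 * (Real.pi : ℂ) * Complex.I * ((u / T : ℝ) : ℂ) * (τ : ℂ)) with hdef
  have hexp_norm : ∀ r : ℝ,
      ‖Complex.exp (2 * (Real.pi : ℂ) * Complex.I * (r : ℂ) * (τ : ℂ))‖ = 1 := by
    intro r
    have : 2 * (Real.pi : ℂ) * Complex.I * (r : ℂ) * (τ : ℂ)
        = ((2 * Real.pi * r * τ : ℝ) : ℂ) * Complex.I := by push_cast; ring
    rw [this, Complex.norm_exp_ofReal_mul_I]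
  have hnorm : ∀ u : ℝ, ‖h u‖ = ‖G (u / T)‖ := by
    intro u; rw [hdef]; simp only [norm_mul, hexp_norm, mul_one]
  have hcont : Continuous h := by
    rw [hdef, hGS]; fun_prop
  -- the key rewriting of the statement's terms via `h`
  have hterm : ∀ (f : ℝ) (k : ℤ), h (T * f + k) = G (f + (k : ℝ) / T) *
      Complex.exp (2 * (Real.pi : ℂ) * Complex.I * ((f : ℂ) + (k : ℂ) / (T : ℂ)) * (τ : ℂ)) := by
    intro f k
    have hdiv : (T * f + (k:ℝ)) / T = f + (k:ℝ) / T := by field_simp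
    rw [hdef]
    simp only
    rw [hdiv]
    congr 1
    congr 1
    push_cast
    ring
  -- decay of h
  have hO : h =O[Filter.cocompact ℝ] fun x : ℝ => |x| ^ (-(2:ℝ)) := by
    have htend : Filter.Tendsto (fun u : ℝ => u / T)
        (Filter.cocompact ℝ) (Filter.cocompact ℝ) := by
      simpa [div_eq_mul_inv] using
        Filter.tendsto_cocompact_mul_right₀ (inv_ne_zero hT0) (K := ℝ)
    have h1 : (fun u : ℝ => G (u / T)) =O[Filter.cocompact ℝ]
        fun u : ℝ => ‖u / T‖ ^ (-(2:ℝ)) :=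
      (hGS ▸ (fourierTransformCLM ℝ g).isBigO_cocompact_rpow (-2)).comp_tendsto htend
    have h2 : (fun u : ℝ => ‖u / T‖ ^ (-(2:ℝ))) =O[Filter.cocompact ℝ]
        fun u : ℝ => |u| ^ (-(2:ℝ)) := by
      apply Asymptotics.IsBigO.of_bound (T ^ (2:ℕ))
      filter_upwards with u
      have key : ‖u / T‖ ^ (-(2:ℝ)) = T ^ (2:ℕ) * |u| ^ (-(2:ℝ)) := by
        rw [Real.norm_eq_abs, abs_div, abs_of_pos hT, Real.div_rpow (abs_nonneg u) hT.le,
          Real.rpow_neg hT.le, div_eq_mul_inv, inv_inv, mul_comm]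
        norm_num [Real.rpow_natCast]
      simp only [Real.norm_eq_abs] at key ⊢
      rw [key, _root_.abs_of_nonneg (by positivity : (0:ℝ) ≤ T ^ (2:ℕ) * |u| ^ (-(2:ℝ))),
        _root_.abs_of_nonneg (by positivity : (0:ℝ) ≤ |u| ^ (-(2:ℝ)))]
    have h3 : h =O[Filter.cocompact ℝ] fun u : ℝ => G (u / T) := by
      apply Asymptotics.IsBigO.of_bound 1
      filter_upwards with u
      rw [hnorm u, one_mul]
    exact (h3.trans h1).trans h2
  -- local summability of the translates
  have h_norm : ∀ K : TopologicalSpace.Compacts ℝ,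
      Summable fun n : ℤ =>
        ‖((⟨h, hcont⟩ : C(ℝ, ℂ)).comp (ContinuousMap.addRight (n:ℝ))).restrict K‖ := by
    intro K
    exact summable_of_isBigO (Real.summable_abs_int_rpow one_lt_two)
      ((isBigO_norm_restrict_cocompact ⟨h, hcont⟩ (by norm_num : (0:ℝ) < 2) hO K).comp_tendsto
        Int.tendsto_coe_cofinite)
  have hsummable : ∀ x : ℝ, Summable fun n : ℤ => ‖h (x + n)‖ := by
    intro x
    refine Summable.of_nonneg_of_le (fun n => norm_nonneg _) (fun n => ?_)
      (h_norm ⟨Set.Icc x x, isCompact_Icc⟩)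
    have hmem : x ∈ Set.Icc x x := Set.mem_Icc.mpr ⟨le_refl x, le_refl x⟩
    have := ContinuousMap.norm_coe_le_norm
      (((⟨h, hcont⟩ : C(ℝ, ℂ)).comp (ContinuousMap.addRight (n:ℝ))).restrict (Set.Icc x x))
      ⟨x, hmem⟩
    simpa using this
  -- first claim
  have claim1 : ∀ f : ℝ, Summable fun k : ℤ =>
      ‖G (f + (k : ℝ) / T) *
        Complex.exp (2 * (Real.pi : ℂ) * Complex.I * ((f : ℂ) + (k : ℂ) / (T : ℂ)) * (τ : ℂ))‖ := by
    intro f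
    have := hsummable (T * f)
    refine this.congr fun k => ?_
    rw [hterm f k]
  refine ⟨claim1, ?_⟩
  -- the Fourier transform of h
  have hFh : ∀ ξ : ℝ, 𝓕 h ξ = (T : ℂ) * g (τ - T * ξ) := by
    intro ξ
    set Ψ : ℝ → ℂ := fun u =>
      Complex.exp (↑(-2 * Real.pi * u * (T * ξ - τ)) * Complex.I) • G u with hΨ
    rw [hdef, Real.fourier_real_eq_integral_exp_smul]
    have hpt : ∀ v : ℝ, Complex.exp (↑(-2 * Real.pi * v * ξ) * Complex.I) •
        (G (v / T) * Complex.exp (2 * (Real.pi : ℂ) * Complex.I * ((v / T : ℝ) : ℂ) * (τ : ℂ)))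
        = Ψ (v / T) := by
      intro v
      have hTC : (T : ℂ) ≠ 0 := by exact_mod_cast hT0
      simp only [hΨ, smul_eq_mul]
      rw [mul_comm (G (v / T)) _, ← mul_assoc, ← Complex.exp_add]
      congr 2
      push_cast
      field_simp
      ring
    simp_rw [hpt]
    rw [MeasureTheory.Measure.integral_comp_div Ψ T]
    have hints : ∫ u : ℝ, Ψ u = 𝓕 G (T * ξ - τ) := by
      rw [Real.fourier_real_eq_integral_exp_smul]
    rw [hints]
    have hinv : 𝓕 G (T * ξ - τ) = g (-(T * ξ - τ)) := by
      rw [hG]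
      have h1 : 𝓕⁻ (𝓕 ⇑g) (-(T * ξ - τ)) = 𝓕 (𝓕 ⇑g) (T * ξ - τ) := by
        rw [Real.fourierInv_eq_fourier_neg, neg_neg]
      rw [← h1, Continuous.fourierInv_fourier_eq g.continuous g.integrable
        ((fourierTransformCLM ℝ g).integrable)]
    rw [hinv]
    rw [abs_of_pos hT, neg_sub]
    simp [Complex.real_smul]
  -- the periodized function on the unit circle
  set hC : C(ℝ, ℂ) := ⟨h, hcont⟩ with hCdef
  set P : C(UnitAddCircle, ℂ) :=
    ⟨(hC.periodic_tsum_comp_add_zsmul 1).lift,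
      continuous_coinduced_dom.mpr (map_continuous _)⟩ with hPdef
  have hPcoeff : ∀ m : ℤ, fourierCoeff (⇑P) m = 𝓕 h m :=
    fun m => Real.fourierCoeff_tsum_comp_add h_norm m
  have hPval : ∀ x : ℝ, P x = ∑' n : ℤ, h (x + n) := by
    intro x
    have hsum : Summable fun n : ℤ => hC.comp (ContinuousMap.addRight (n • (1:ℝ))) := by
      simpa [zsmul_one] using ContinuousMap.summable_of_locally_summable_norm h_norm
    simp only [hPdef, ContinuousMap.coe_mk, Function.Periodic.lift_coe]
    rw [← ContinuousMap.tsum_apply hsum x]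
    simp [hCdef]
  -- Parseval
  set PL : Lp ℂ 2 (@AddCircle.haarAddCircle 1 _) :=
    ContinuousMap.toLp 2 AddCircle.haarAddCircle ℂ P with hPL
  have hPars : ∑' m : ℤ, ‖fourierCoeff (⇑P) m‖ ^ 2
      = ∫ t : UnitAddCircle, ‖P t‖ ^ 2 ∂AddCircle.haarAddCircle := by
    have h1 := tsum_sq_fourierCoeff PL
    have h2 : ∀ m : ℤ, fourierCoeff (⇑PL) m = fourierCoeff (⇑P) m :=
      fun m => fourierCoeff_toLp P m
    simp_rw [h2] at h1
    rw [h1]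
    refine integral_congr_ae ?_
    filter_upwards [ContinuousMap.coeFn_toLp (p := 2)
      (μ := @AddCircle.haarAddCircle 1 _) (𝕜 := ℂ) P] with t ht
    rw [ht]
  have hint : ∫ t : UnitAddCircle, ‖P t‖ ^ 2 ∂AddCircle.haarAddCircle
      = ∫ x in (-(1/2) : ℝ)..(-(1/2) + 1), ‖P x‖ ^ 2 := by
    rw [UnitAddCircle.intervalIntegral_preimage (-(1/2)) (fun t => ‖P t‖ ^ 2)]
    rw [AddCircle.volume_eq_smul_haarAddCircle]
    simp
  -- the left-hand side via the Fourier coefficients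
  have hLHS : ∑' m : ℤ, ‖fourierCoeff (⇑P) m‖ ^ 2
      = T^2 * ∑' n : ℤ, ‖g (τ + (n : ℝ) * T)‖ ^ 2 := by
    have e1 : ∀ m : ℤ, ‖fourierCoeff (⇑P) m‖ ^ 2 = T^2 * ‖g (τ - T * (m:ℝ))‖ ^ 2 := by
      intro m
      rw [hPcoeff m, hFh (m:ℝ), norm_mul, Complex.norm_real, Real.norm_eq_abs, abs_of_pos hT,
        mul_pow]
    simp_rw [e1]
    rw [tsum_mul_left]
    congr 1
    have := (Equiv.neg ℤ).tsum_eq (fun n : ℤ => ‖g (τ + (n : ℝ) * T)‖ ^ 2)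
    rw [← this]
    refine tsum_congr fun m => ?_
    congr 2
    simp only [Equiv.neg_apply]
    push_cast
    ring
  -- the right-hand side integral via substitution
  have hsub : ∫ x in (-(1/2) : ℝ)..(1/2), ‖P x‖ ^ 2
      = T * ∫ f in (-(1 / (2 * T)))..(1 / (2 * T)), ‖P ((T * f : ℝ) : UnitAddCircle)‖ ^ 2 := by
    have h1 := intervalIntegral.integral_comp_mul_left
      (fun x : ℝ => ‖P (x : UnitAddCircle)‖ ^ 2) (a := -(1 / (2 * T))) (b := 1 / (2 * T)) hT0
    rw [h1]
    have e1 : T * -(1 / (2 * T)) = -(1/2) := by field_simp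
    have e2 : T * (1 / (2 * T)) = 1/2 := by field_simp
    rw [e1, e2, smul_eq_mul, ← mul_assoc, mul_inv_cancel₀ hT0, one_mul]
  have hPT : ∀ f : ℝ, ‖P ((T * f : ℝ) : UnitAddCircle)‖ ^ 2
      = ‖∑' k : ℤ, G (f + (k : ℝ) / T) *
          Complex.exp (2 * (Real.pi : ℂ) * Complex.I *
            ((f : ℂ) + (k : ℂ) / (T : ℂ)) * (τ : ℂ))‖ ^ 2 := by
    intro f
    rw [hPval (T * f)]
    congr 2
    exact tsum_congr fun k => hterm f k
  -- put everything together
  have key : T^2 * ∑' n : ℤ, ‖g (τ + (n : ℝ) * T)‖ ^ 2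
      = T * ∫ f in (-(1 / (2 * T)))..(1 / (2 * T)),
        ‖∑' k : ℤ, G (f + (k : ℝ) / T) *
          Complex.exp (2 * (Real.pi : ℂ) * Complex.I *
            ((f : ℂ) + (k : ℂ) / (T : ℂ)) * (τ : ℂ))‖ ^ 2 := by
    rw [← hLHS, hPars, hint]
    have : (-(1/2) : ℝ) + 1 = 1/2 := by norm_num
    rw [this, hsub]
    congr 1
    refine intervalIntegral.integral_congr fun f _ => ?_
    exact hPT f
  have hT2 : (T:ℝ)^2 ≠ 0 := pow_ne_zero 2 hT0
  apply mul_left_cancel₀ hT2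
  rw [key, ← mul_assoc, pow_two, mul_assoc T T, mul_one_div_cancel hT0, mul_one]
end

section
/- Let g : ℝ → ℂ be a Schwartz function whose Fourier transform is real-valued and nonnegative, let T > 0, and suppose g satisfies the Nyquist no-ISI condition: g(0) = 1 and g(n·T) = 0 for every nonzero integer n. Then for every τ ∈ ℝ, ∑_{i ∈ ℤ} ‖g(τ + i·T)‖² ≤ 1. -/
open MeasureTheory SchwartzMap

open FourierTransform Complex Finset

noncomputable section

def ee (x f : ℝ) : ℂ := Complex.exp (((2 * Real.pi * (f * x) : ℝ) : ℂ) * Complex.I)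

lemma ee_zero (f : ℝ) : ee 0 f = 1 := by simp [ee]

lemma ee_mul (x y f : ℝ) : ee x f * ee y f = ee (x + y) f := by
  rw [ee, ee, ee, ← Complex.exp_add]
  congr 1
  push_cast
  ring

lemma ee_conj (x f : ℝ) : (starRingEnd ℂ) (ee x f) = ee (-x) f := by
  rw [ee, ee, ← Complex.exp_conj, map_mul, Complex.conj_I, Complex.conj_ofReal]
  congr 1
  push_cast
  ring

lemma ee_norm (x f : ℝ) : ‖ee x f‖ = 1 := by
  rw [ee, Complex.norm_exp]
  simp

lemma ee_cont (x : ℝ) : Continuous (ee x) := by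
  apply Complex.continuous_exp.comp
  fun_prop


/-- For a Schwartz Nyquist pulse (no-ISI condition) whose Fourier
transform is real-valued and nonnegative, the inter-user interference energy at any
offset `τ` is at most `1 = IUI(0)`. -/
theorem IUI_le_one_of_nyquist (g : SchwartzMap ℝ ℂ) (T : ℝ) (hT : 0 < T)
    (hreal : ∀ f : ℝ, (FourierTransform.fourier (⇑g : ℝ → ℂ) f).im = 0)
    (hnonneg : ∀ f : ℝ, 0 ≤ (FourierTransform.fourier (⇑g : ℝ → ℂ) f).re)
    (hzero : g 0 = 1)
    (hnyquist : ∀ n : ℤ, n ≠ 0 → g ((n : ℝ) * T) = 0)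
    (τ : ℝ) :
    ∑' i : ℤ, ‖g (τ + (i : ℝ) * T)‖ ^ 2 ≤ 1 := by
  classical
  have hGint : Integrable (𝓕 ⇑g) := by
    exact (SchwartzMap.fourierTransformCLM ℂ g).integrable (μ := volume)
  have key : ∀ x : ℝ, (∫ f : ℝ, 𝓕 (⇑g) f * ee x f) = g x := by
    intro x
    have hinv : 𝓕⁻ (𝓕 ⇑g) = ⇑g := g.continuous.fourierInv_fourier_eq g.integrable hGint
    have h := congrFun hinv x
    rw [Real.fourierInv_eq'] at h
    rw [← h]
    congr 1
    ext f
    rw [smul_eq_mul, mul_comm, ee]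
    norm_num [RCLike.inner_apply, mul_comm (x : ℂ)]
  have hGconj : ∀ f : ℝ, (starRingEnd ℂ) (𝓕 (⇑g) f) = 𝓕 (⇑g) f := fun f =>
    Complex.conj_eq_iff_im.mpr (hreal f)
  have int_e : ∀ x : ℝ, Integrable (fun f => 𝓕 (⇑g) f * ee x f) := by
    intro x
    have h := hGint.bdd_mul (ee_cont x).aestronglyMeasurable
      (Filter.Eventually.of_forall fun f => le_of_eq (ee_norm x f))
    exact h.congr (Filter.Eventually.of_forall fun f => mul_comm _ _)
  have gneg : ∀ x : ℝ, g (-x) = (starRingEnd ℂ) (g x) := by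
    intro x
    rw [← key x, ← key (-x), ← integral_conj]
    congr 1
    ext f
    rw [map_mul, hGconj, ee_conj]
  set v : ℤ → ℂ := fun i => g (τ + (i : ℝ) * T) with hv
  have hsq : ∀ z : ℂ, z * (starRingEnd ℂ) z = ((‖z‖ ^ 2 : ℝ) : ℂ) := by
    intro z
    rw [Complex.mul_conj, Complex.normSq_eq_norm_sq]
  have finbound : ∀ s : Finset ℤ, ∑ n ∈ s, ‖v n‖ ^ 2 ≤ 1 := by
    intro s
    set t : ℤ → ℝ := fun n => τ + (n : ℝ) * T with ht
    set u : ℝ → ℂ := fun f => 1 - ∑ n ∈ s, (starRingEnd ℂ) (v n) * ee (t n) f with hu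
    have hu_conj : ∀ f, (starRingEnd ℂ) (u f) = 1 - ∑ n ∈ s, v n * ee (-(t n)) f := by
      intro f
      simp only [hu, map_sub, map_one, map_sum, map_mul, RingHomCompTriple.comp_apply,
        Complex.conj_conj, ee_conj, RingHom.id_apply]
    have expand : ∀ f : ℝ, (u f * (starRingEnd ℂ) (u f)) * 𝓕 (⇑g) f =
        𝓕 (⇑g) f * ee 0 f
        - ∑ m ∈ s, v m * (𝓕 (⇑g) f * ee (-(t m)) f)
        - ∑ n ∈ s, (starRingEnd ℂ) (v n) * (𝓕 (⇑g) f * ee (t n) f)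
        + ∑ n ∈ s, ∑ m ∈ s,
            ((starRingEnd ℂ) (v n) * v m) * (𝓕 (⇑g) f * ee (t n + -(t m)) f) := by
      intro f
      have e1 : (∑ m ∈ s, v m * ee (-(t m)) f) * 𝓕 (⇑g) f
          = ∑ m ∈ s, v m * (𝓕 (⇑g) f * ee (-(t m)) f) := by
        rw [Finset.sum_mul]
        exact Finset.sum_congr rfl fun m _ => by ring
      have e2 : (∑ n ∈ s, (starRingEnd ℂ) (v n) * ee (t n) f) * 𝓕 (⇑g) f
          = ∑ n ∈ s, (starRingEnd ℂ) (v n) * (𝓕 (⇑g) f * ee (t n) f) := by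
        rw [Finset.sum_mul]
        exact Finset.sum_congr rfl fun n _ => by ring
      have e3 : ((∑ n ∈ s, (starRingEnd ℂ) (v n) * ee (t n) f)
            * (∑ m ∈ s, v m * ee (-(t m)) f)) * 𝓕 (⇑g) f
          = ∑ n ∈ s, ∑ m ∈ s,
              ((starRingEnd ℂ) (v n) * v m) * (𝓕 (⇑g) f * ee (t n + -(t m)) f) := by
        rw [Finset.sum_mul_sum, Finset.sum_mul]
        refine Finset.sum_congr rfl fun n _ => ?_
        rw [Finset.sum_mul]
        refine Finset.sum_congr rfl fun m _ => ?_
        rw [← ee_mul (t n) (-(t m)) f]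
        ring
      rw [hu_conj]
      simp only [hu]
      rw [← e1, ← e2, ← e3, ee_zero]
      ring
    have I1 : Integrable (fun f : ℝ => ∑ m ∈ s, v m * (𝓕 (⇑g) f * ee (-(t m)) f)) :=
      integrable_finset_sum _ fun m _ => (int_e _).const_mul _
    have I2 : Integrable (fun f : ℝ =>
        ∑ n ∈ s, (starRingEnd ℂ) (v n) * (𝓕 (⇑g) f * ee (t n) f)) :=
      integrable_finset_sum _ fun n _ => (int_e _).const_mul _
    have I3 : Integrable (fun f : ℝ => ∑ n ∈ s, ∑ m ∈ s,
        ((starRingEnd ℂ) (v n) * v m) * (𝓕 (⇑g) f * ee (t n + -(t m)) f)) :=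
      integrable_finset_sum _ fun n _ =>
        integrable_finset_sum _ fun m _ => (int_e _).const_mul _
    have hInt : (∫ f : ℝ, (u f * (starRingEnd ℂ) (u f)) * 𝓕 (⇑g) f)
        = (((1 : ℝ) - ∑ n ∈ s, ‖v n‖ ^ 2 : ℝ) : ℂ) := by
      rw [integral_congr_ae (Filter.Eventually.of_forall expand)]
      have IL1 : Integrable (fun f : ℝ => 𝓕 (⇑g) f * ee 0 f
          - ∑ m ∈ s, v m * (𝓕 (⇑g) f * ee (-(t m)) f)) := by
        exact (int_e 0).sub I1
      have IL2 : Integrable (fun f : ℝ => (𝓕 (⇑g) f * ee 0 f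
          - ∑ m ∈ s, v m * (𝓕 (⇑g) f * ee (-(t m)) f))
          - ∑ n ∈ s, (starRingEnd ℂ) (v n) * (𝓕 (⇑g) f * ee (t n) f)) := by
        exact IL1.sub I2
      rw [integral_add IL2 I3, integral_sub IL1 I2, integral_sub (int_e 0) I1,
        integral_finset_sum _ (fun m _ => (int_e _).const_mul _),
        integral_finset_sum _ (fun n _ => (int_e _).const_mul _),
        integral_finset_sum _ (fun n _ =>
          integrable_finset_sum _ fun m _ => (int_e _).const_mul _)]
      have J0 : (∫ f : ℝ, 𝓕 (⇑g) f * ee 0 f) = 1 := by rw [key 0, hzero]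
      have Jm : ∀ m : ℤ, (∫ f : ℝ, v m * (𝓕 (⇑g) f * ee (-(t m)) f))
          = ((‖v m‖ ^ 2 : ℝ) : ℂ) := by
        intro m
        rw [integral_const_mul, key, ht]
        show v m * g (-(τ + (m : ℝ) * T)) = _
        rw [gneg, hsq]
      have Jn : ∀ n : ℤ, (∫ f : ℝ, (starRingEnd ℂ) (v n) * (𝓕 (⇑g) f * ee (t n) f))
          = ((‖v n‖ ^ 2 : ℝ) : ℂ) := by
        intro n
        rw [integral_const_mul, key, ht]
        show (starRingEnd ℂ) (v n) * v n = _
        rw [mul_comm, hsq]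
      have Jnm : ∀ n ∈ s, (∫ f : ℝ, ∑ m ∈ s,
          ((starRingEnd ℂ) (v n) * v m) * (𝓕 (⇑g) f * ee (t n + -(t m)) f))
          = ((‖v n‖ ^ 2 : ℝ) : ℂ) := by
        intro n hn
        rw [integral_finset_sum _ (fun m _ => (int_e _).const_mul _)]
        rw [Finset.sum_eq_single_of_mem n hn]
        · rw [integral_const_mul]
          have harg : t n + -(t n) = (0 : ℝ) := by ring
          rw [harg, key 0, hzero, mul_one, mul_comm, hsq]
        · intro m _ hmn
          rw [integral_const_mul]
          have harg : t n + -(t m) = ((n - m : ℤ) : ℝ) * T := by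
            simp only [ht]
            push_cast
            ring
          rw [harg, key, hnyquist (n - m) (sub_ne_zero.mpr (Ne.symm hmn)), mul_zero]
      rw [J0, Finset.sum_congr rfl (fun m _ => Jm m), Finset.sum_congr rfl (fun n _ => Jn n),
        Finset.sum_congr rfl Jnm]
      push_cast
      ring
    -- nonnegativity of the integral
    have hu_cont : Continuous u := by
      refine continuous_const.sub (continuous_finset_sum _ fun n _ => ?_)
      exact continuous_const.mul (ee_cont _)
    have hub : ∀ f : ℝ, ‖u f‖ ≤ 1 + ∑ n ∈ s, ‖v n‖ := by
      intro f
      refine (norm_sub_le _ _).trans ?_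
      rw [norm_one]
      refine add_le_add_right ((norm_sum_le _ _).trans (le_of_eq ?_)) 1
      refine Finset.sum_congr rfl fun n _ => ?_
      rw [norm_mul, ee_norm, mul_one, RCLike.norm_conj]
    have hprod_int : Integrable (fun f : ℝ => (u f * (starRingEnd ℂ) (u f)) * 𝓕 (⇑g) f) := by
      refine hGint.bdd_mul (c := (1 + ∑ n ∈ s, ‖v n‖) ^ 2) ?_ (Filter.Eventually.of_forall fun f => ?_)
      · exact (hu_cont.mul (Complex.continuous_conj.comp hu_cont)).aestronglyMeasurable
      · rw [norm_mul, RCLike.norm_conj, sq]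
        have h1 := hub f
        have h2 : (0:ℝ) ≤ ‖u f‖ := norm_nonneg _
        nlinarith
    have hre : 0 ≤ (∫ f : ℝ, (u f * (starRingEnd ℂ) (u f)) * 𝓕 (⇑g) f).re := by
      have h := integral_re hprod_int (𝕜 := ℂ)
      simp only [RCLike.re_to_complex] at h
      rw [← h]
      refine integral_nonneg fun f => ?_
      rw [hsq]
      simp only [Complex.mul_re, Complex.ofReal_re, Complex.ofReal_im, zero_mul, sub_zero]
      exact mul_nonneg (by positivity) (hnonneg f)
    rw [hInt] at hre
    simp only [Complex.ofReal_re] at hre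
    linarith
  have hsum : Summable (fun i : ℤ => ‖v i‖ ^ 2) :=
    summable_of_sum_le (fun i => by positivity) finbound
  exact Summable.tsum_le_of_sum_le hsum finbound

end
end

section
/- Let 0 < σ₁ < σ₂ and P > 0, and define f : ℝ → ℝ by f(P₁) = Real.logb 2 (1 + P₁/σ₁) + Real.logb 2 (1 + (P − P₁)/(P₁ + σ₂)). Then f is strictly monotonically increasing on the interval [0, P]; consequently f attains its maximum over [0, P] uniquely at P₁ = P, and the maximum value is Real.logb 2 (1 + P/σ₁). -/
/-- With distinct channel qualities `σ₁ < σ₂`, the two-user P-NOMA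
sum-rate is strictly increasing in the strong user's power `P₁`, so its maximum over
`[0, P]` is attained uniquely at `P₁ = P`, where it equals `log₂(1 + P/σ₁)`. -/
theorem pnoma_sum_rate_strict_mono (σ₁ σ₂ P : ℝ) (hσ₁ : 0 < σ₁) (hσ₁₂ : σ₁ < σ₂)
    (hP : 0 < P) (f : ℝ → ℝ)
    (hf : ∀ P₁, f P₁ = Real.logb 2 (1 + P₁ / σ₁) +
      Real.logb 2 (1 + (P - P₁) / (P₁ + σ₂))) :
    StrictMonoOn f (Set.Icc 0 P) ∧
      (∀ P₁ ∈ Set.Icc (0 : ℝ) P, f P₁ ≤ f P) ∧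
      (∀ P₁ ∈ Set.Icc (0 : ℝ) P, f P₁ = f P → P₁ = P) ∧
      f P = Real.logb 2 (1 + P / σ₁) := by
  have hσ₂ : (0:ℝ) < σ₂ := hσ₁.trans hσ₁₂
  -- rewrite f on [0,P]
  have key : ∀ x ∈ Set.Icc (0:ℝ) P,
      f x = Real.logb 2 ((σ₁ + x) * (P + σ₂) / (σ₁ * (x + σ₂))) := by
    intro x hx
    obtain ⟨hx0, hxP⟩ := hx
    have hxσ₂ : 0 < x + σ₂ := by linarith
    have h1 : 1 + x / σ₁ = (σ₁ + x) / σ₁ := by field_simp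
    have h2 : 1 + (P - x) / (x + σ₂) = (P + σ₂) / (x + σ₂) := by
      field_simp; ring
    rw [hf, h1, h2, ← Real.logb_mul (by positivity) (by positivity)]
    congr 1
    field_simp
  have mono : StrictMonoOn f (Set.Icc 0 P) := by
    intro x hx y hy hxy
    rw [key x hx, key y hy]
    obtain ⟨hx0, hxP⟩ := hx
    obtain ⟨hy0, hyP⟩ := hy
    have hxσ₂ : 0 < x + σ₂ := by linarith
    have hyσ₂ : 0 < y + σ₂ := by linarith
    apply Real.logb_lt_logb one_lt_two (by positivity)
    rw [div_lt_div_iff₀ (by positivity) (by positivity)]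
    nlinarith [mul_pos (mul_pos hσ₁ (show (0:ℝ) < P + σ₂ by linarith))
      (mul_pos (show (0:ℝ) < σ₂ - σ₁ by linarith) (show (0:ℝ) < y - x by linarith))]
  refine ⟨mono, ?_, ?_, ?_⟩
  · intro x hx
    rcases eq_or_lt_of_le hx.2 with h | h
    · rw [h]
    · exact (mono hx (Set.right_mem_Icc.2 hP.le) h).le
  · intro x hx hfx
    by_contra hne
    have h : x < P := lt_of_le_of_ne hx.2 hne
    exact absurd hfx (mono hx (Set.right_mem_Icc.2 hP.le) h).ne
  · rw [hf]
    simp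
end

section
/- Let 0 < σ₁ ≤ σ₂, 0 < g < 1, P > 0, and let P₁ satisfy 0 ≤ P₁ < P. Then Real.logb 2 (1 + P₁/σ₁) + Real.logb 2 (1 + (P − P₁)/(g·P₁ + σ₂)) > Real.logb 2 (1 + P/σ₁) holds if and only if P₁ > (σ₂ − σ₁)/(1 − g). -/
/-- The AP-NOMA sum-rate with power split `(P₁, P − P₁)` strictly exceeds
the best P-NOMA sum-rate `log₂(1 + P/σ₁)` if and only if `P₁ > (σ₂ − σ₁)/(1 − g)`. -/
theorem apnoma_beats_pnoma_iff (σ₁ σ₂ g P P₁ : ℝ) (hσ₁ : 0 < σ₁) (hσ₁₂ : σ₁ ≤ σ₂)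
    (hg₀ : 0 < g) (hg₁ : g < 1) (hP : 0 < P) (hP₁ : 0 ≤ P₁) (hP₁P : P₁ < P) :
    Real.logb 2 (1 + P₁ / σ₁) + Real.logb 2 (1 + (P - P₁) / (g * P₁ + σ₂)) >
        Real.logb 2 (1 + P / σ₁) ↔
      P₁ > (σ₂ - σ₁) / (1 - g) := by
  have hσ₂ : 0 < σ₂ := lt_of_lt_of_le hσ₁ hσ₁₂
  have hd : 0 < g * P₁ + σ₂ := by positivity
  have hPP₁ : 0 < P - P₁ := by linarith
  have h1 : (0:ℝ) < 1 + P₁ / σ₁ := by positivity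
  have h2 : (0:ℝ) < 1 + (P - P₁) / (g * P₁ + σ₂) := by positivity
  have h3 : (0:ℝ) < 1 + P / σ₁ := by positivity
  have hg' : (0:ℝ) < 1 - g := by linarith
  have key : (1 + P₁ / σ₁) * (1 + (P - P₁) / (g * P₁ + σ₂)) - (1 + P / σ₁)
      = ((P - P₁) * ((1 - g) * P₁ - (σ₂ - σ₁))) / (σ₁ * (g * P₁ + σ₂)) := by
    field_simp
    ring
  rw [gt_iff_lt, ← Real.logb_mul h1.ne' h2.ne',
    Real.logb_lt_logb_iff (b := 2) (by norm_num) h3 (mul_pos h1 h2), ← sub_pos, key,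
    lt_div_iff₀ (by positivity), zero_mul, gt_iff_lt, div_lt_iff₀ hg']
  constructor
  · intro h
    nlinarith
  · intro h
    nlinarith
end

section
/- Let 0 < σ₁ ≤ σ₂, 0 < g < 1, and suppose P > (σ₂ − σ₁)/(1 − g). Set A = P·(σ₂ − g·σ₁) + σ₂·(σ₂ − σ₁) and P₁* = (−σ₂ + Real.sqrt (σ₂² + (g/(1−g))·A)) / g. Then 0 < P₁* < P, and P₁* is the unique maximizer over [0, P] of the function f(P₁) = Real.logb 2 (1 + P₁/σ₁) + Real.logb 2 (1 + (P − P₁)/(g·P₁ + σ₂)). -/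
set_option maxHeartbeats 1000000


/-- Above the power threshold `(σ₂ − σ₁)/(1 − g)`, the AP-NOMA sum-rate
is uniquely maximized over `[0, P]` at the interior point
`P₁* = (−σ₂ + √(σ₂² + (g/(1−g))·A))/g` with `A = P(σ₂ − gσ₁) + σ₂(σ₂ − σ₁)`. -/
theorem apnoma_optimal_power_split (σ₁ σ₂ g P : ℝ) (hσ₁ : 0 < σ₁) (hσ₁₂ : σ₁ ≤ σ₂)
    (hg₀ : 0 < g) (hg₁ : g < 1) (hP : P > (σ₂ - σ₁) / (1 - g))
    (A P₁star : ℝ) (hA : A = P * (σ₂ - g * σ₁) + σ₂ * (σ₂ - σ₁))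
    (hP₁star : P₁star = (-σ₂ + Real.sqrt (σ₂ ^ 2 + (g / (1 - g)) * A)) / g)
    (f : ℝ → ℝ)
    (hf : ∀ P₁, f P₁ = Real.logb 2 (1 + P₁ / σ₁) +
      Real.logb 2 (1 + (P - P₁) / (g * P₁ + σ₂))) :
    0 < P₁star ∧ P₁star < P ∧
      (∀ P₁ ∈ Set.Icc (0 : ℝ) P, f P₁ ≤ f P₁star) ∧
      (∀ P₁ ∈ Set.Icc (0 : ℝ) P, f P₁ = f P₁star → P₁ = P₁star) := by
  have h1g : (0:ℝ) < 1 - g := by linarith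
  have hσ₂ : 0 < σ₂ := lt_of_lt_of_le hσ₁ hσ₁₂
  have hPpos : 0 < P := lt_of_le_of_lt (div_nonneg (by linarith) h1g.le) hP
  have hPg : σ₂ - σ₁ < (1 - g) * P := by
    have := (div_lt_iff₀ h1g).mp hP
    linarith [this]
  have hApos : 0 < A := by
    have : g * σ₁ ≤ g * σ₂ := by nlinarith
    have h1 : 0 < σ₂ - g * σ₁ := by nlinarith
    nlinarith [mul_pos hPpos h1]
  set s := Real.sqrt (σ₂ ^ 2 + (g / (1 - g)) * A) with hs_def
  have harg : 0 ≤ σ₂ ^ 2 + (g / (1 - g)) * A := by positivity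
  have hs2 : s ^ 2 = σ₂ ^ 2 + (g / (1 - g)) * A := Real.sq_sqrt harg
  have hs0 : 0 ≤ s := Real.sqrt_nonneg _
  have hsgt : σ₂ < s := by
    have h1 : 0 < (g / (1 - g)) * A := by positivity
    nlinarith
  have hP1pos : 0 < P₁star := by
    rw [hP₁star]
    exact div_pos (by linarith) hg₀
  -- quadratic identity: g * P₁star ^ 2 + 2 * σ₂ * P₁star = A / (1 - g)
  have hquad : (1 - g) * (g * P₁star ^ 2 + 2 * σ₂ * P₁star) = A := by
    have hstar : g * P₁star = -σ₂ + s := by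
      rw [hP₁star]; field_simp
    have h1 : (g * P₁star) ^ 2 + 2 * σ₂ * (g * P₁star) = s ^ 2 - σ₂ ^ 2 := by
      rw [hstar]; ring
    have h2 : s ^ 2 - σ₂ ^ 2 = (g / (1 - g)) * A := by linarith [hs2]
    have h3 : g * ((g * P₁star ^ 2 + 2 * σ₂ * P₁star) * (1 - g) - A) = 0 := by
      have : (g * P₁star) ^ 2 + 2 * σ₂ * (g * P₁star) = (g / (1 - g)) * A := by
        rw [h1, h2]
      field_simp at this
      nlinarith [this]
    have := mul_eq_zero.mp h3
    rcases this with h | h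
    · exact absurd h hg₀.ne'
    · linarith
  have hP1lt : P₁star < P := by
    -- s < σ₂ + g * P
    have hkey : A < (1 - g) * (2 * σ₂ * P + g * P ^ 2) := by
      nlinarith [mul_pos (show (0:ℝ) < (1-g)*P - (σ₂ - σ₁) by linarith) (show (0:ℝ) < σ₂ + g*P by positivity)]
    have hlt1 : (g / (1 - g)) * A < g * (2 * σ₂ * P + g * P ^ 2) := by
      rw [div_mul_eq_mul_div, div_lt_iff₀ h1g]
      nlinarith [mul_lt_mul_of_pos_left hkey hg₀]
    have h2 : s ^ 2 < (σ₂ + g * P) ^ 2 := by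
      rw [hs2]; nlinarith [hlt1]
    have h3 : s < σ₂ + g * P := lt_of_pow_lt_pow_left₀ 2 (by positivity) h2
    rw [hP₁star, div_lt_iff₀ hg₀]
    linarith
  refine ⟨hP1pos, hP1lt, ?_⟩
  -- core inequality on the polynomial level
  have hden : ∀ x : ℝ, 0 ≤ x → 0 < g * x + σ₂ := by
    intro x hx; positivity
  have hnum : ∀ x : ℝ, x ≤ P → 0 < (g - 1) * x + σ₂ + P := by
    intro x hx; nlinarith
  set N : ℝ → ℝ := fun x => (σ₁ + x) * ((g - 1) * x + σ₂ + P) with hN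
  have hkeyineq : ∀ x ∈ Set.Icc (0:ℝ) P, x ≠ P₁star →
      N x * (g * P₁star + σ₂) < N P₁star * (g * x + σ₂) := by
    intro x hx hne
    have hsq : 0 < (x - P₁star) ^ 2 :=
      lt_of_le_of_ne (sq_nonneg _) (Ne.symm (pow_ne_zero 2 (sub_ne_zero.mpr hne)))
    have hfac : N P₁star * (g * x + σ₂) - N x * (g * P₁star + σ₂) =
        (1 - g) * (g * P₁star + σ₂) * (x - P₁star) ^ 2
        + (x - P₁star) * ((1 - g) * (g * P₁star ^ 2 + 2 * σ₂ * P₁star) - A) := by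
      simp only [hN, hA]; ring
    rw [hquad] at hfac
    have hd := hden P₁star hP1pos.le
    nlinarith [mul_pos (mul_pos h1g hd) hsq, hfac]
  -- rewrite f as logb of a quotient
  have hfq : ∀ x ∈ Set.Icc (0:ℝ) P,
      f x = Real.logb 2 (N x / (σ₁ * (g * x + σ₂))) := by
    intro x hx
    obtain ⟨hx0, hxP⟩ := hx
    have hd := hden x hx0
    have hn := hnum x hxP
    have e1 : 1 + x / σ₁ = (σ₁ + x) / σ₁ := by field_simp
    have e2 : 1 + (P - x) / (g * x + σ₂) = ((g - 1) * x + σ₂ + P) / (g * x + σ₂) := by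
      field_simp; ring
    rw [hf, e1, e2, ← Real.logb_mul (by positivity) (by positivity)]
    congr 1
    rw [hN]
    field_simp
  have hP1mem : P₁star ∈ Set.Icc (0:ℝ) P := ⟨hP1pos.le, hP1lt.le⟩
  have hstrict : ∀ x ∈ Set.Icc (0:ℝ) P, x ≠ P₁star → f x < f P₁star := by
    intro x hx hne
    rw [hfq x hx, hfq P₁star hP1mem]
    have hd := hden x hx.1
    have hd' := hden P₁star hP1pos.le
    have hn := hnum x hx.2
    have hn' := hnum P₁star hP1lt.le
    have hNx : 0 < N x := by
      rw [hN]; have : 0 < σ₁ + x := by linarith [hx.1]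
      exact mul_pos this hn
    have hNs : 0 < N P₁star := by
      rw [hN]; have : 0 < σ₁ + P₁star := by linarith
      exact mul_pos this hn'
    apply Real.logb_lt_logb (by norm_num)
    · positivity
    · rw [div_lt_div_iff₀ (by positivity) (by positivity)]
      have := hkeyineq x hx hne
      nlinarith [this, hσ₁]
  constructor
  · intro x hx
    by_cases h : x = P₁star
    · rw [h]
    · exact (hstrict x hx h).le
  · intro x hx hfx
    by_contra h
    exact absurd hfx (hstrict x hx h).ne
end

section
/- Let 0 < σ₁ ≤ σ₂, 0 < g < 1, and suppose 0 < P ≤ (σ₂ − σ₁)/(1 − g). Then the function f(P₁) = Real.logb 2 (1 + P₁/σ₁) + Real.logb 2 (1 + (P − P₁)/(g·P₁ + σ₂)) is monotonically increasing on [0, P]; hence its maximum over [0, P] is attained at P₁ = P and equals Real.logb 2 (1 + P/σ₁). -/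
lemma keyB (σ₁ σ₂ g P x y : ℝ) (hσ₁ : 0 < σ₁) (hσ₁₂ : σ₁ ≤ σ₂) (hg₀ : 0 < g)
    (hg₁ : g < 1) (hP' : (1-g)*P ≤ σ₂ - σ₁) (hx : 0 ≤ x) (hxy : x ≤ y) (hy : y ≤ P) :
    0 ≤ σ₂*((g-1)*(x+y) + σ₂ + P + σ₁*(g-1)) + g*((g-1)*x*y - σ₁*(σ₂+P)) := by
  have hd : 0 ≤ 1 - g := by linarith
  have hσ₂ : 0 < σ₂ := lt_of_lt_of_le hσ₁ hσ₁₂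
  have hPx : 0 ≤ P - x := by linarith
  have hPy : 0 ≤ P - y := by linarith
  have hP0 : 0 ≤ P := le_trans (le_trans hx hxy) hy
  have hk : 0 ≤ σ₂ - σ₁ - (1-g)*P := by linarith
  nlinarith [mul_nonneg (mul_nonneg hd hσ₂.le) hPx, mul_nonneg (mul_nonneg hd hσ₂.le) hPy,
    mul_nonneg (mul_nonneg (mul_nonneg hd hg₀.le) hPy) hP0,
    mul_nonneg (mul_nonneg (mul_nonneg hd hg₀.le) hx) hPy,
    mul_nonneg (mul_nonneg (mul_nonneg hd hg₀.le) hPx) hP0,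
    mul_nonneg hk hσ₂.le, mul_nonneg (mul_nonneg hk hg₀.le) hP0]

lemma key (σ₁ σ₂ g P x y : ℝ) (hσ₁ : 0 < σ₁) (hσ₁₂ : σ₁ ≤ σ₂) (hg₀ : 0 < g)
    (hg₁ : g < 1) (hP' : (1-g)*P ≤ σ₂ - σ₁) (hx : 0 ≤ x) (hxy : x ≤ y) (hy : y ≤ P) :
    (σ₁+x)*(g*x+σ₂+(P-x))*(g*y+σ₂) ≤ (σ₁+y)*(g*y+σ₂+(P-y))*(g*x+σ₂) := by
  have hB := keyB σ₁ σ₂ g P x y hσ₁ hσ₁₂ hg₀ hg₁ hP' hx hxy hy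
  nlinarith [mul_nonneg (sub_nonneg.2 hxy) hB]

/-- Below the power threshold `(σ₂ − σ₁)/(1 − g)`, the AP-NOMA sum-rate
is monotonically increasing on `[0, P]`, so its maximum is attained at `P₁ = P` where
it equals `log₂(1 + P/σ₁)`. -/
theorem apnoma_low_power_allocation (σ₁ σ₂ g P : ℝ) (hσ₁ : 0 < σ₁) (hσ₁₂ : σ₁ ≤ σ₂)
    (hg₀ : 0 < g) (hg₁ : g < 1) (hP₀ : 0 < P) (hP : P ≤ (σ₂ - σ₁) / (1 - g))
    (f : ℝ → ℝ)
    (hf : ∀ P₁, f P₁ = Real.logb 2 (1 + P₁ / σ₁) +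
      Real.logb 2 (1 + (P - P₁) / (g * P₁ + σ₂))) :
    MonotoneOn f (Set.Icc 0 P) ∧
      (∀ P₁ ∈ Set.Icc (0 : ℝ) P, f P₁ ≤ f P) ∧
      f P = Real.logb 2 (1 + P / σ₁) := by
  have hσ₂ : 0 < σ₂ := lt_of_lt_of_le hσ₁ hσ₁₂
  have hd : 0 < 1 - g := by linarith
  have hP' : (1-g)*P ≤ σ₂ - σ₁ := by
    rw [mul_comm]
    exact (le_div_iff₀ hd).mp hP
  -- denominator positivity
  have hden : ∀ x : ℝ, 0 ≤ x → 0 < g * x + σ₂ := fun x hx => by positivity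
  -- f as single log
  have hmono : MonotoneOn f (Set.Icc 0 P) := by
    rintro x ⟨hx0, hxP⟩ y ⟨hy0, hyP⟩ hxy
    rw [hf x, hf y]
    have hdx := hden x hx0
    have hdy := hden y hy0
    have h1x : (0:ℝ) < 1 + x / σ₁ := by positivity
    have h1y : (0:ℝ) < 1 + y / σ₁ := by positivity
    have h2x : (0:ℝ) < 1 + (P - x) / (g * x + σ₂) := by
      have : 0 ≤ (P - x) / (g * x + σ₂) := div_nonneg (by linarith) hdx.le
      linarith
    have h2y : (0:ℝ) < 1 + (P - y) / (g * y + σ₂) := by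
      have : 0 ≤ (P - y) / (g * y + σ₂) := div_nonneg (by linarith) hdy.le
      linarith
    rw [← Real.logb_mul h1x.ne' h2x.ne', ← Real.logb_mul h1y.ne' h2y.ne']
    apply Real.logb_le_logb_of_le (by norm_num) (by positivity)
    have hxeq : (1 + x / σ₁) * (1 + (P - x) / (g * x + σ₂))
        = (σ₁+x)*(g*x+σ₂+(P-x)) / (σ₁ * (g*x+σ₂)) := by
      field_simp
    have hyeq : (1 + y / σ₁) * (1 + (P - y) / (g * y + σ₂))
        = (σ₁+y)*(g*y+σ₂+(P-y)) / (σ₁ * (g*y+σ₂)) := by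
      field_simp
    rw [hxeq, hyeq, div_le_div_iff₀ (by positivity) (by positivity)]
    have := key σ₁ σ₂ g P x y hσ₁ hσ₁₂ hg₀ hg₁ hP' hx0 hxy hyP
    nlinarith [this, hσ₁]
  refine ⟨hmono, fun P₁ hP₁ => hmono hP₁ ⟨hP₀.le, le_refl P⟩ hP₁.2, ?_⟩
  rw [hf P]
  simp
end

section
/- Let 0 < σ₁ ≤ σ₂, 0 < g < 1, and P > (σ₂ − σ₁)/(1 − g). Define on [0, P] the functions f_P(x) = Real.logb 2 (1 + x/σ₁) + Real.logb 2 (1 + (P − x)/(x + σ₂)), f_AP(x) = Real.logb 2 (1 + x/σ₁) + Real.logb 2 (1 + (P − x)/(g·x + σ₂)), and f_T(x) = Real.logb 2 (1 + x/σ₁) + Real.logb 2 (1 + (P − x)/σ₂). Then the maxima over [0, P] satisfy the strict inequalities max f_P < max f_AP < max f_T. -/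
/-- Above the power threshold `(σ₂ − σ₁)/(1 − g)`, the maximum sum-rates
satisfy the strict ordering P-NOMA < AP-NOMA < T-NOMA. -/
theorem sum_rate_ordering (σ₁ σ₂ g P : ℝ) (hσ₁ : 0 < σ₁) (hσ₁₂ : σ₁ ≤ σ₂)
    (hg₀ : 0 < g) (hg₁ : g < 1) (hP : P > (σ₂ - σ₁) / (1 - g))
    (fP fAP fT : ℝ → ℝ)
    (hfP : ∀ x, fP x = Real.logb 2 (1 + x / σ₁) +
      Real.logb 2 (1 + (P - x) / (x + σ₂)))
    (hfAP : ∀ x, fAP x = Real.logb 2 (1 + x / σ₁) +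
      Real.logb 2 (1 + (P - x) / (g * x + σ₂)))
    (hfT : ∀ x, fT x = Real.logb 2 (1 + x / σ₁) +
      Real.logb 2 (1 + (P - x) / σ₂)) :
    sSup (fP '' Set.Icc 0 P) < sSup (fAP '' Set.Icc 0 P) ∧
      sSup (fAP '' Set.Icc 0 P) < sSup (fT '' Set.Icc 0 P) := by
  have hb2 : (1:ℝ) < 2 := one_lt_two
  have hσ₂ : 0 < σ₂ := lt_of_lt_of_le hσ₁ hσ₁₂
  have h1g : 0 < 1 - g := by linarith
  have hPg : σ₂ - σ₁ < (1 - g) * P := by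
    rw [gt_iff_lt, div_lt_iff₀ h1g] at hP; linarith
  obtain ⟨T, tP⟩ : ∃ T : ℝ, (1 - g) * T = σ₂ - σ₁ :=
    ⟨(σ₂ - σ₁) / (1 - g), by field_simp⟩
  have hT0 : 0 ≤ T := by nlinarith
  have hTP : T < P := by nlinarith
  have hP0 : 0 < P := lt_of_le_of_lt hT0 hTP
  obtain ⟨x₀, hx₀def⟩ : ∃ x : ℝ, x = (T + P) / 2 := ⟨_, rfl⟩
  have hx₀pos : 0 < x₀ := by rw [hx₀def]; linarith
  have hx₀P : x₀ < P := by rw [hx₀def]; linarith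
  have hTx₀ : T < x₀ := by rw [hx₀def]; linarith
  set L : ℝ := Real.logb 2 (1 + P / σ₁) with hLdef
  -- pointwise bound for fP
  have hfPbound : ∀ x ∈ Set.Icc (0:ℝ) P, fP x ≤ L := by
    intro x hx
    obtain ⟨hx0, hxP⟩ := hx
    have hA : (0:ℝ) < 1 + x / σ₁ := by positivity
    have hden : (0:ℝ) < x + σ₂ := by linarith
    have hB : (0:ℝ) < 1 + (P - x) / (x + σ₂) := by
      have h1 : 0 ≤ (P - x) / (x + σ₂) := div_nonneg (by linarith) hden.le
      linarith
    rw [hfP, ← Real.logb_mul hA.ne' hB.ne']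
    apply Real.logb_le_logb_of_le hb2 (mul_pos hA hB)
    have key : (1 + x / σ₁) * (1 + (P - x) / (x + σ₂))
        = ((σ₁ + x) * (P + σ₂)) / (σ₁ * (x + σ₂)) := by
      rw [one_add_div hσ₁.ne', one_add_div hden.ne', div_mul_div_comm]
      ring_nf
    have key2 : 1 + P / σ₁ = (σ₁ + P) / σ₁ := by field_simp
    rw [key, key2, div_le_div_iff₀ (by positivity) hσ₁]
    nlinarith [mul_nonneg (sub_nonneg.mpr hxP) (sub_nonneg.mpr hσ₁₂)]
  have hne : (fP '' Set.Icc 0 P).Nonempty :=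
    ⟨fP 0, Set.mem_image_of_mem fP (Set.left_mem_Icc.mpr hP0.le)⟩
  have hsupP : sSup (fP '' Set.Icc 0 P) ≤ L := by
    apply csSup_le hne
    rintro y ⟨z, hz, rfl⟩
    exact hfPbound z hz
  -- L < fAP x₀
  have hLx₀ : L < fAP x₀ := by
    have hA : (0:ℝ) < 1 + x₀ / σ₁ := by positivity
    have hden : (0:ℝ) < g * x₀ + σ₂ := by positivity
    have hB : (0:ℝ) < 1 + (P - x₀) / (g * x₀ + σ₂) := by
      have h1 : 0 ≤ (P - x₀) / (g * x₀ + σ₂) := div_nonneg (by linarith) hden.le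
      linarith
    rw [hfAP, ← Real.logb_mul hA.ne' hB.ne', hLdef]
    apply Real.logb_lt_logb hb2 (by positivity)
    have key : (1 + x₀ / σ₁) * (1 + (P - x₀) / (g * x₀ + σ₂))
        = ((σ₁ + x₀) * (g * x₀ + σ₂ + P - x₀)) / (σ₁ * (g * x₀ + σ₂)) := by
      rw [one_add_div hσ₁.ne', one_add_div hden.ne', div_mul_div_comm]
      ring_nf
    have key2 : 1 + P / σ₁ = (σ₁ + P) / σ₁ := by field_simp
    rw [key, key2, div_lt_div_iff₀ hσ₁ (by positivity)]
    have hid : (σ₁ + x₀) * (g * x₀ + σ₂ + P - x₀) - (σ₁ + P) * (g * x₀ + σ₂)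
        = (1 - g) * (P - x₀) * (x₀ - T) := by
      linear_combination (P - x₀) * tP
    nlinarith [mul_pos (mul_pos h1g (sub_pos.mpr hx₀P)) (sub_pos.mpr hTx₀)]
  -- endpoint values of fAP
  have hfAPP : fAP P = L := by rw [hfAP]; simp [hLdef]
  have hfAP0 : fAP 0 ≤ L := by
    rw [hfAP]
    simp only [zero_div, add_zero, mul_zero, zero_add, sub_zero, Real.logb_one]
    apply Real.logb_le_logb_of_le hb2 (by positivity)
    have : P / σ₂ ≤ P / σ₁ := div_le_div_of_nonneg_left hP0.le hσ₁ hσ₁₂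
    linarith
  -- continuity of fAP on the interval
  have hcont : ContinuousOn fAP (Set.Icc 0 P) := by
    have hEq : fAP = fun x => Real.logb 2 (1 + x / σ₁) +
        Real.logb 2 (1 + (P - x) / (g * x + σ₂)) := funext hfAP
    rw [hEq]
    intro x hx
    obtain ⟨hx0, hxP⟩ := hx
    apply ContinuousWithinAt.add
    · apply ContinuousAt.continuousWithinAt
      have harg1 : (0:ℝ) < 1 + x / σ₁ := by positivity
      have hinner : ContinuousAt (fun y : ℝ => 1 + y / σ₁) x :=
        continuousAt_const.add (continuousAt_id.div_const _)
      exact ContinuousAt.comp (f := fun y : ℝ => 1 + y / σ₁)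
        (Real.continuousAt_logb harg1.ne') hinner
    · apply ContinuousAt.continuousWithinAt
      have hden : (0:ℝ) < g * x + σ₂ := by positivity
      have harg : (0:ℝ) < 1 + (P - x) / (g * x + σ₂) := by
        have : 0 ≤ (P - x) / (g * x + σ₂) := div_nonneg (by linarith) hden.le
        linarith
      have hinner : ContinuousAt (fun y : ℝ => 1 + (P - y) / (g * y + σ₂)) x :=
        continuousAt_const.add (ContinuousAt.div
          (continuousAt_const.sub continuousAt_id)
          ((continuousAt_const.mul continuousAt_id).add continuousAt_const) hden.ne')
      exact ContinuousAt.comp (f := fun y : ℝ => 1 + (P - y) / (g * y + σ₂))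
        (Real.continuousAt_logb harg.ne') hinner
  -- maximum of fAP attained
  obtain ⟨xs, hxs, hmax⟩ := isCompact_Icc.exists_isMaxOn
    (Set.nonempty_Icc.mpr hP0.le) hcont
  have hmax' : ∀ y ∈ Set.Icc (0:ℝ) P, fAP y ≤ fAP xs := fun y hy => hmax hy
  have hbddAP : BddAbove (fAP '' Set.Icc 0 P) := by
    refine ⟨fAP xs, ?_⟩
    rintro y ⟨z, hz, rfl⟩
    exact hmax' z hz
  have hx₀mem : x₀ ∈ Set.Icc (0:ℝ) P := ⟨hx₀pos.le, hx₀P.le⟩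
  have hsupAP : sSup (fAP '' Set.Icc 0 P) = fAP xs := by
    apply le_antisymm
    · apply csSup_le ⟨fAP 0, Set.mem_image_of_mem fAP (Set.left_mem_Icc.mpr hP0.le)⟩
      rintro y ⟨z, hz, rfl⟩
      exact hmax' z hz
    · exact le_csSup hbddAP (Set.mem_image_of_mem fAP hxs)
  have hxsgt : L < fAP xs := lt_of_lt_of_le hLx₀ (hmax' x₀ hx₀mem)
  have hxs0 : 0 < xs := by
    rcases lt_or_eq_of_le hxs.1 with h | h
    · exact h
    · exfalso; rw [← h] at hxsgt; exact absurd hfAP0 (not_le.mpr hxsgt)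
  have hxsP : xs < P := by
    rcases lt_or_eq_of_le hxs.2 with h | h
    · exact h
    · exfalso; rw [h] at hxsgt; rw [hfAPP] at hxsgt; exact lt_irrefl _ hxsgt
  -- fT xs > fAP xs
  have hfTgt : fAP xs < fT xs := by
    rw [hfAP, hfT]
    have hden : (0:ℝ) < g * xs + σ₂ := by positivity
    have h2 : (P - xs) / (g * xs + σ₂) < (P - xs) / σ₂ := by
      apply div_lt_div_of_pos_left (by linarith) hσ₂
      nlinarith
    have hB : (0:ℝ) < 1 + (P - xs) / (g * xs + σ₂) := by
      have : 0 ≤ (P - xs) / (g * xs + σ₂) := div_nonneg (by linarith) hden.le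
      linarith
    have := Real.logb_lt_logb hb2 hB (by linarith : 1 + (P - xs) / (g * xs + σ₂) < 1 + (P - xs) / σ₂)
    linarith
  -- bound for fT, to get BddAbove
  have hbddT : BddAbove (fT '' Set.Icc 0 P) := by
    refine ⟨Real.logb 2 (1 + P / σ₁) + Real.logb 2 (1 + P / σ₂), ?_⟩
    rintro y ⟨z, ⟨hz0, hzP⟩, rfl⟩
    rw [hfT]
    have h1 : Real.logb 2 (1 + z / σ₁) ≤ Real.logb 2 (1 + P / σ₁) := by
      apply Real.logb_le_logb_of_le hb2 (by positivity)
      gcongr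
    have h2 : Real.logb 2 (1 + (P - z) / σ₂) ≤ Real.logb 2 (1 + P / σ₂) := by
      apply Real.logb_le_logb_of_le hb2 ?_
      · gcongr <;> linarith
      · have : 0 ≤ (P - z) / σ₂ := div_nonneg (by linarith) hσ₂.le
        linarith
    linarith
  constructor
  · calc sSup (fP '' Set.Icc 0 P) ≤ L := hsupP
      _ < fAP xs := hxsgt
      _ = sSup (fAP '' Set.Icc 0 P) := hsupAP.symm
  · calc sSup (fAP '' Set.Icc 0 P) = fAP xs := hsupAP
      _ < fT xs := hfTgt
      _ ≤ sSup (fT '' Set.Icc 0 P) :=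
        le_csSup hbddT (Set.mem_image_of_mem fT ⟨hxs0.le, hxsP.le⟩)
end

section
/- Let σ > 0, P > 0, 0 < g < 1, and let P₁ satisfy 0 < P₁ < P. Then Real.logb 2 (1 + P₁/σ) + Real.logb 2 (1 + (P − P₁)/(g·P₁ + σ)) > Real.logb 2 (1 + P/σ). -/
/-- With equal channel qualities, AP-NOMA with any strictly interior
power split strictly outperforms the (constant) P-NOMA sum-rate `log₂(1 + P/σ)`. -/
theorem apnoma_beats_pnoma_equal_channels (σ P g P₁ : ℝ) (hσ : 0 < σ) (hP : 0 < P)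
    (hg₀ : 0 < g) (hg₁ : g < 1) (hP₁₀ : 0 < P₁) (hP₁P : P₁ < P) :
    Real.logb 2 (1 + P₁ / σ) + Real.logb 2 (1 + (P - P₁) / (g * P₁ + σ)) >
      Real.logb 2 (1 + P / σ) := by
  have hb : 0 < g * P₁ + σ := by positivity
  have h1 : (0:ℝ) < 1 + P₁ / σ := by positivity
  have h2 : (0:ℝ) < 1 + (P - P₁) / (g * P₁ + σ) := by
    have : 0 < P - P₁ := by linarith
    positivity
  rw [← Real.logb_mul (ne_of_gt h1) (ne_of_gt h2)]
  apply Real.logb_lt_logb one_lt_two (by positivity)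
  have key : (1 + P₁ / σ) * (1 + (P - P₁) / (g * P₁ + σ)) - (1 + P / σ)
      = (P - P₁) * P₁ * (1 - g) / (σ * (g * P₁ + σ)) := by
    field_simp
    ring
  have hpos : (0:ℝ) < (P - P₁) * P₁ * (1 - g) / (σ * (g * P₁ + σ)) := div_pos (mul_pos (mul_pos (by linarith) hP₁₀) (by linarith)) (by positivity)
  linarith
end

section
/- Let σ₁ > 0, σ₂ > 0, P > 0 with P ≤ |σ₂ − σ₁|. Then the maximum over P₁ ∈ [0, P] of f_T(P₁) = Real.logb 2 (1 + P₁/σ₁) + Real.logb 2 (1 + (P − P₁)/σ₂) equals Real.logb 2 (1 + P / min σ₁ σ₂), and it is attained by assigning all power to the stronger user (P₁ = P if σ₁ ≤ σ₂, and P₁ = 0 if σ₂ ≤ σ₁). -/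
/-- When the power budget does not exceed the channel disparity
`|σ₂ − σ₁|`, the T-NOMA maximum sum-rate over `[0, P]` equals
`log₂(1 + P / min σ₁ σ₂)` and is attained by giving all power to the stronger user. -/
theorem tnoma_low_power_max (σ₁ σ₂ P : ℝ) (hσ₁ : 0 < σ₁) (hσ₂ : 0 < σ₂)
    (hP₀ : 0 < P) (hP : P ≤ |σ₂ - σ₁|) (fT : ℝ → ℝ)
    (hfT : ∀ P₁, fT P₁ = Real.logb 2 (1 + P₁ / σ₁) +
      Real.logb 2 (1 + (P - P₁) / σ₂)) :
    (∀ P₁ ∈ Set.Icc (0 : ℝ) P, fT P₁ ≤ Real.logb 2 (1 + P / min σ₁ σ₂)) ∧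
      (σ₁ ≤ σ₂ → fT P = Real.logb 2 (1 + P / min σ₁ σ₂)) ∧
      (σ₂ ≤ σ₁ → fT 0 = Real.logb 2 (1 + P / min σ₁ σ₂)) := by
  have hm : 0 < min σ₁ σ₂ := lt_min hσ₁ hσ₂
  refine ⟨?_, ?_, ?_⟩
  · rintro x ⟨hx0, hxP⟩
    rw [hfT]
    have ha : 0 < 1 + x / σ₁ := by positivity
    have hb : 0 < 1 + (P - x) / σ₂ := by
      have : 0 ≤ (P - x) / σ₂ := div_nonneg (by linarith) hσ₂.le
      linarith
    rw [← Real.logb_mul ha.ne' hb.ne']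
    apply Real.logb_le_logb_of_le one_lt_two (mul_pos ha hb)
    have hσσ : 0 < σ₁ * σ₂ := mul_pos hσ₁ hσ₂
    have key : (1 + x / σ₁) * (1 + (P - x) / σ₂) ≤ 1 + P / min σ₁ σ₂ := by
      rcases le_total σ₁ σ₂ with h | h
      · have hP' : P ≤ σ₂ - σ₁ := by
          rwa [abs_of_nonneg (by linarith)] at hP
        rw [min_eq_left h,
          show (1 + x / σ₁) * (1 + (P - x) / σ₂)
            = (σ₁ + x) * (σ₂ + (P - x)) / (σ₁ * σ₂) by field_simp; try ring,
          show 1 + P / σ₁ = (σ₁ + P) * σ₂ / (σ₁ * σ₂) by field_simp; try ring,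
          div_le_div_iff_of_pos_right hσσ]
        nlinarith [mul_nonneg (sub_nonneg.mpr hxP) (by linarith : (0:ℝ) ≤ σ₂ - σ₁ - x)]
      · have hP' : P ≤ σ₁ - σ₂ := by
          rwa [abs_of_nonpos (by linarith), neg_sub] at hP
        rw [min_eq_right h,
          show (1 + x / σ₁) * (1 + (P - x) / σ₂)
            = (σ₁ + x) * (σ₂ + (P - x)) / (σ₁ * σ₂) by field_simp; try ring,
          show 1 + P / σ₂ = (σ₂ + P) * σ₁ / (σ₁ * σ₂) by field_simp; try ring,
          div_le_div_iff_of_pos_right hσσ]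
        nlinarith [mul_nonneg hx0 (by linarith : (0:ℝ) ≤ σ₁ - σ₂ - (P - x))]
    exact key
  · intro h
    rw [hfT, min_eq_left h]
    simp
  · intro h
    rw [hfT, min_eq_right h]
    simp
end
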